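/- Let F be the free group on two generators x and y. For an integer k, the power ⁅x, y⁆^k lies in the third term γ₃(F) of the lower central series of F if and only if k = 0. -/

import Mathlib

open scoped commutatorElement

/-!
Send `x ↦ (1, 0, 0)` and `y ↦ (0, 1, 0)` in the integer Heisenberg group. There all
commutators are central, so `γ₃` is trivial and hence `γ₃(F)` is mapped to `1`; but the image of
`⁅x, y⁆ ^ k` is the central element `(0, 0, k)`, which is trivial only for `k = 0`.
-/

theorem Subgroup.map_eq_one_of_mem_lowerCentralSeries {G H : Type*} [Group G] [Group H]
    (f : G →* H) {n : ℕ} (hH : lowerCentralSeries (⊤ : Subgroup H) n = ⊥) {g : G}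
    (hg : g ∈ lowerCentralSeries (⊤ : Subgroup G) n) : f g = 1 := by
  have hfg : f g ∈ (lowerCentralSeries ⊤ n).map f := mem_map_of_mem f hg
  rw [map_lowerCentralSeries] at hfg
  simpa [hH] using lowerCentralSeries_mono n le_top hfg

/-- The integer Heisenberg group, i.e. upper unitriangular `3 × 3` integer matrices
`[[1, a, c], [0, 1, b], [0, 0, 1]]`. -/
@[ext]
structure Heis where
  a : ℤ
  b : ℤ
  c : ℤ

namespace Heis

instance : Mul Heis := ⟨fun p q => ⟨p.a + q.a, p.b + q.b, p.c + q.c + p.a * q.b⟩⟩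
instance : One Heis := ⟨⟨0, 0, 0⟩⟩
instance : Inv Heis := ⟨fun p => ⟨-p.a, -p.b, -p.c + p.a * p.b⟩⟩

@[simp] theorem mul_a (p q : Heis) : (p * q).a = p.a + q.a := rfl
@[simp] theorem mul_b (p q : Heis) : (p * q).b = p.b + q.b := rfl
@[simp] theorem mul_c (p q : Heis) : (p * q).c = p.c + q.c + p.a * q.b := rfl
@[simp] theorem one_a : (1 : Heis).a = 0 := rfl
@[simp] theorem one_b : (1 : Heis).b = 0 := rfl
@[simp] theorem one_c : (1 : Heis).c = 0 := rfl
@[simp] theorem inv_a (p : Heis) : p⁻¹.a = -p.a := rfl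
@[simp] theorem inv_b (p : Heis) : p⁻¹.b = -p.b := rfl
@[simp] theorem inv_c (p : Heis) : p⁻¹.c = -p.c + p.a * p.b := rfl

instance : Group Heis where
  mul_assoc p q r := by ext <;> simp <;> ring
  one_mul p := by ext <;> simp
  mul_one p := by ext <;> simp
  inv_mul_cancel p := by ext <;> simp

theorem commutator_eq (p q : Heis) : ⁅p, q⁆ = ⟨0, 0, p.a * q.b - q.a * p.b⟩ := by
  ext <;> simp [commutatorElement_def]
  ring

theorem commutator_mem_center (p q : Heis) : ⁅p, q⁆ ∈ Subgroup.center Heis := by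
  rw [Subgroup.mem_center_iff]
  intro g
  ext <;> simp [commutator_eq, add_comm]

theorem lowerCentralSeries_two_eq_bot : Subgroup.lowerCentralSeries (⊤ : Subgroup Heis) 2 = ⊥ := by
  rw [Subgroup.lowerCentralSeries_succ, Subgroup.commutator_eq_bot_iff_le_centralizer,
    Subgroup.coe_top, Subgroup.centralizer_univ, Subgroup.lowerCentralSeries_succ,
    Subgroup.lowerCentralSeries_zero, Subgroup.commutator_le]
  exact fun p _ q _ => commutator_mem_center p q

theorem central_zpow (c k : ℤ) : (⟨0, 0, c⟩ : Heis) ^ k = ⟨0, 0, k * c⟩ := by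
  induction k using Int.induction_on with
  | zero => ext <;> simp
  | succ n ih => rw [zpow_add_one, ih]; ext <;> simp; ring
  | pred n ih => rw [zpow_sub_one, ih]; ext <;> simp; ring

end Heis

/-- Let `F` be the free group on two generators `x` and `y`.  For an integer `k`,
the power `⁅x, y⁆ ^ k` lies in the third term `γ₃(F) = lowerCentralSeries F 2` of the
lower central series of `F` if and only if `k = 0`. -/
theorem commutator_zpow_mem_lcs3_iff_eq_zero (k : ℤ)
    (x y : FreeGroup (Fin 2)) (hx : x = FreeGroup.of 0) (hy : y = FreeGroup.of 1) :
    ⁅x, y⁆ ^ k ∈ Subgroup.lowerCentralSeries (⊤ : Subgroup (FreeGroup (Fin 2))) 2 ↔ k = 0 := by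
  constructor
  · intro hmem
    let φ : FreeGroup (Fin 2) →* Heis := FreeGroup.lift ![⟨1, 0, 0⟩, ⟨0, 1, 0⟩]
    have hφ_one : φ (⁅x, y⁆ ^ k) = 1 :=
      Subgroup.map_eq_one_of_mem_lowerCentralSeries φ Heis.lowerCentralSeries_two_eq_bot hmem
    have hφ_central : φ (⁅x, y⁆ ^ k) = ⟨0, 0, k⟩ := by
      rw [map_zpow, map_commutatorElement, hx, hy, Heis.commutator_eq]
      simpa [φ] using Heis.central_zpow 1 k
    simpa using congrArg Heis.c (hφ_central.symm.trans hφ_one)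
  · rintro rfl
    rw [zpow_zero]
    exact Subgroup.one_mem _
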